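/- arXiv:1801.02745 — 2 statements merged into one kernel-verified Lean document; each statement's English description precedes it below -/
import Mathlib

section
/- The expected value of the digamma distribution satisfies E[Y^(q)] = e^{−(1+γ)}·q + o(q) as q → 0⁺; that is, lim_{q→0⁺} ( Σ_{y=1}^∞ y·e^{g(y)}·(q/e)^y / y! ) / ( q·S(q) ) = e^{−(1+γ)}. -/
/-!
Write `S(q) = Σ c_y q^y` with `c_y = e^{g(y)} / (e^y y!)`. Since `H_{y-1} - log y < γ`, we have
`ψ(y) < log y`, so `e^{g(y)} ≤ y^y ≤ e^y y!` and `0 ≤ c_y ≤ 1`. The numerator is then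
`q · Σ (n+1) c_{n+1} q^n`, and both power series have radius of convergence bounded away from `0`,
so by Tannery's theorem they tend to their constant terms `c_0 = 1` and `c_1 = e^{-(1+γ)}`.
-/

/-- `ψ(y) = −γ + Σ_{k=1}^{y−1} 1/k` for a positive integer `y`. -/
noncomputable def psi (y : ℕ) : ℝ :=
  -Real.eulerMascheroniConstant + ∑ k ∈ Finset.Icc 1 (y - 1), (1 : ℝ) / k

/-- `g(0) = 0` and `g(y) = y·ψ(y)` for `y ≥ 1`. -/
noncomputable def g (y : ℕ) : ℝ := y * psi y

/-- The normalizing sum `S(q) = Σ_{y=0}^∞ e^{g(y)}·(q/e)^y / y!` of the digamma distribution. -/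
noncomputable def S (q : ℝ) : ℝ :=
  ∑' y : ℕ, Real.exp (g y) * (q / Real.exp 1) ^ y / Nat.factorial y

open Filter Topology Real
open scoped Nat

section PowerSeriesNearZero

variable {a : ℕ → ℝ} {r : ℝ}

theorem abs_mul_pow_le (ha : ∀ n, |a n| ≤ r ^ n) (n : ℕ) (q : ℝ) :
    |a n * q ^ n| ≤ (|q| * r) ^ n := by
  rw [abs_mul, abs_pow, mul_pow, mul_comm (|q| ^ n)]
  exact mul_le_mul_of_nonneg_right (ha n) (by positivity)

theorem summable_mul_pow_of_abs_le (ha : ∀ n, |a n| ≤ r ^ n) (hr : 0 ≤ r) {q : ℝ}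
    (hq : |q| * r < 1) : Summable fun n => a n * q ^ n :=
  .of_norm_bounded (summable_geometric_of_lt_one (by positivity) hq) fun n => abs_mul_pow_le ha n q

theorem tendsto_tsum_mul_pow_nhds_zero (ha : ∀ n, |a n| ≤ r ^ n) (hr : 0 ≤ r) :
    Tendsto (fun q => ∑' n, a n * q ^ n) (𝓝 0) (𝓝 (a 0)) := by
  have hsmall : ∀ᶠ q in 𝓝 (0 : ℝ), |q| * r < 1 / 2 := by
    have : Tendsto (fun q : ℝ => |q| * r) (𝓝 0) (𝓝 0) :=
      (continuous_abs.mul continuous_const).tendsto' _ _ (by simp)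
    exact this.eventually (gt_mem_nhds (by norm_num))
  have hbound : ∀ᶠ q in 𝓝 (0 : ℝ), ∀ n, ‖a n * q ^ n‖ ≤ (1 / 2) ^ n := by
    filter_upwards [hsmall] with q hq n
    exact (abs_mul_pow_le ha n q).trans (pow_le_pow_left₀ (by positivity) hq.le n)
  have := tendsto_tsum_of_dominated_convergence summable_geometric_two
    (fun n => ((continuous_const.mul (continuous_pow n)).tendsto (0 : ℝ))) hbound
  simpa [zero_pow_eq] using this

end PowerSeriesNearZero

theorem psi_lt_log {y : ℕ} (hy : 1 ≤ y) : psi y < log y := by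
  have h := eulerMascheroniSeq_lt_eulerMascheroniConstant (y - 1)
  rw [eulerMascheroniSeq, harmonic_eq_sum_Icc] at h
  push_cast [Nat.cast_sub hy] at h
  rw [sub_add_cancel] at h
  simp only [psi, one_div]
  linarith

theorem exp_g_le_pow_self (y : ℕ) : exp (g y) ≤ (y : ℝ) ^ y := by
  rcases Nat.eq_zero_or_pos y with rfl | hy
  · simp [g]
  · calc exp (g y) ≤ exp (y * log y) :=
          exp_le_exp.2 (mul_le_mul_of_nonneg_left (psi_lt_log hy).le (Nat.cast_nonneg y))
      _ = (y : ℝ) ^ y := by rw [exp_nat_mul, exp_log (by exact_mod_cast hy)]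

noncomputable def digammaCoeff (y : ℕ) : ℝ := exp (g y) / (exp 1 ^ y * y !)

theorem digammaCoeff_nonneg (y : ℕ) : 0 ≤ digammaCoeff y := by
  unfold digammaCoeff; positivity

theorem digammaCoeff_le_one (y : ℕ) : digammaCoeff y ≤ 1 := by
  rw [digammaCoeff, div_le_one (by positivity), ← exp_nat_mul, mul_one]
  calc exp (g y) ≤ (y : ℝ) ^ y := exp_g_le_pow_self y
    _ ≤ exp y * y ! :=
      (div_le_iff₀ (by positivity)).1 (pow_div_factorial_le_exp _ (Nat.cast_nonneg y) y)

theorem digammaCoeff_zero : digammaCoeff 0 = 1 := by simp [digammaCoeff, g]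

theorem digammaCoeff_one : digammaCoeff 1 = exp (-(1 + eulerMascheroniConstant)) := by
  simp [digammaCoeff, g, psi, ← exp_sub]
  ring_nf

theorem abs_digammaCoeff_le_one (y : ℕ) : |digammaCoeff y| ≤ 1 := by
  rw [abs_of_nonneg (digammaCoeff_nonneg y)]
  exact digammaCoeff_le_one y

theorem abs_succ_mul_digammaCoeff_succ_le (n : ℕ) :
    |(n + 1 : ℝ) * digammaCoeff (n + 1)| ≤ 2 ^ n := by
  rw [abs_of_nonneg (by positivity [digammaCoeff_nonneg (n + 1)])]
  calc (n + 1 : ℝ) * digammaCoeff (n + 1) ≤ (n + 1) * 1 :=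
        mul_le_mul_of_nonneg_left (digammaCoeff_le_one _) (by positivity)
    _ ≤ 2 ^ n := by rw [mul_one]; exact_mod_cast Nat.lt_two_pow_self

theorem digamma_term_eq (q : ℝ) (y : ℕ) :
    exp (g y) * (q / exp 1) ^ y / y ! = digammaCoeff y * q ^ y := by
  rw [digammaCoeff, div_pow]
  field_simp

theorem S_eq_tsum (q : ℝ) : S q = ∑' y, digammaCoeff y * q ^ y := by
  simp only [S, digamma_term_eq]

theorem tsum_nat_mul_digamma_term_eq {q : ℝ} (hq : |q| * 2 < 1) :
    ∑' y : ℕ, (y : ℝ) * exp (g y) * (q / exp 1) ^ y / y ! =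
      q * ∑' n : ℕ, ((n + 1 : ℝ) * digammaCoeff (n + 1)) * q ^ n := by
  have hterm (y : ℕ) : (y : ℝ) * exp (g y) * (q / exp 1) ^ y / y ! =
      y * (digammaCoeff y * q ^ y) := by
    rw [← digamma_term_eq]; ring
  have hshift (n : ℕ) : q * ((n + 1 : ℝ) * digammaCoeff (n + 1) * q ^ n) =
      ((n + 1 : ℕ) : ℝ) * (digammaCoeff (n + 1) * q ^ (n + 1)) := by
    push_cast; ring
  have hsum := summable_mul_pow_of_abs_le abs_succ_mul_digammaCoeff_succ_le zero_le_two hq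
  simp only [hterm]
  rw [tsum_eq_zero_add' ((hsum.mul_left q).congr hshift), ← tsum_mul_left, Nat.cast_zero,
    zero_mul, zero_add]
  exact tsum_congr fun n => (hshift n).symm

/-- The expected value of the digamma distribution satisfies
`E[Y^(q)] = e^{−(1+γ)}·q + o(q)` as `q → 0⁺`, i.e.
`(Σ_{y≥1} y·e^{g(y)}·(q/e)^y / y!) / (q·S(q)) → e^{−(1+γ)}` as `q → 0⁺`. -/
theorem stmt11 :
    Filter.Tendsto
      (fun q : ℝ =>
        (∑' y : ℕ, (y : ℝ) * Real.exp (g y) * (q / Real.exp 1) ^ y / Nat.factorial y) /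
          (q * S q))
      (nhdsWithin 0 (Set.Ioi 0))
      (nhds (Real.exp (-(1 + Real.eulerMascheroniConstant)))) := by
  have hS : Tendsto S (𝓝 0) (𝓝 1) := by
    have hcoeff (y : ℕ) : |digammaCoeff y| ≤ 1 ^ y := by
      rw [one_pow]; exact abs_digammaCoeff_le_one y
    simpa [← S_eq_tsum, digammaCoeff_zero] using tendsto_tsum_mul_pow_nhds_zero hcoeff zero_le_one
  have hmean := tendsto_tsum_mul_pow_nhds_zero abs_succ_mul_digammaCoeff_succ_le zero_le_two
  rw [Nat.cast_zero, zero_add, one_mul, digammaCoeff_one] at hmean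
  have hratio := (hmean.div hS one_ne_zero).mono_left (nhdsWithin_le_nhds (s := Set.Ioi 0))
  rw [div_one] at hratio
  refine hratio.congr' ?_
  filter_upwards [Ioo_mem_nhdsGT (by norm_num : (0 : ℝ) < 1 / 2)] with q ⟨hq0, hq⟩
  rw [tsum_nat_mul_digamma_term_eq (by rw [abs_of_pos hq0]; linarith),
    mul_div_mul_left _ _ hq0.ne', Pi.div_apply]
end

section
/- Let λ ≥ 0 and 0 ≤ δ ≤ 1. Then the Poisson distribution with mean λ satisfies Pr[ |Poi(λ) − λ| ≤ δλ ] ≥ 1 − 2·exp(−δ²·λ/4); that is, Σ_{y∈ℕ : |y−λ| ≤ δλ} e^{−λ}·λ^y / y! ≥ 1 − 2·exp(−δ²·λ/4). -/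
/-!
Chernoff's method. The moment generating function of `Poi(λ)` is `E e^{tY} = exp (λ (e^t - 1))`,
so Markov's inequality for `e^{tY}` with `e^t = 1 ± δ` bounds the two tails by
`exp (λ (u - (1 + u) log (1 + u)))` with `u = ± δ`. The elementary inequality
`u + u² / 4 ≤ (1 + u) log (1 + u)` on `[-1, 1]` turns each of these into `exp (-δ² λ / 4)`.
-/

/-- The pmf of the Poisson distribution with mean `l`. -/
noncomputable def poissonPMF (l : ℝ) (y : ℕ) : ℝ := Real.exp (-l) * l ^ y / Nat.factorial y

open Real

lemma tsum_subtype_le_add_of_subset_union {β : Type*} {f : β → ℝ} (hf : Summable f)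
    (hf₀ : 0 ≤ f) {s t u : Set β} (hs : s ⊆ t ∪ u) :
    ∑' b : s, f b ≤ ∑' b : t, f b + ∑' b : u, f b := by
  simp only [tsum_subtype]
  rw [← (hf.indicator t).tsum_add (hf.indicator u)]
  refine (hf.indicator s).tsum_le_tsum (fun b => ?_) ((hf.indicator t).add (hf.indicator u))
  rw [← Set.indicator_union_add_inter_apply]
  exact (Set.indicator_le_indicator_of_subset hs hf₀ b).trans
    (le_add_of_nonneg_right (Set.indicator_nonneg (fun b _ => hf₀ b) b))

lemma add_sq_div_four_le_one_add_mul_log {u : ℝ} (hu₀ : -1 ≤ u) (hu₁ : u ≤ 1) :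
    u + u ^ 2 / 4 ≤ (1 + u) * log (1 + u) := by
  set g : ℝ → ℝ := fun v => (1 + v) * log (1 + v) - v - v ^ 2 / 4
  have hcont : Continuous g :=
    ((continuous_mul_log.comp (continuous_const_add 1)).sub continuous_id).sub (by fun_prop)
  have hderiv (v : ℝ) (hv : -1 < v) : HasDerivAt g (log (1 + v) - v / 2) v := by
    have h1v : 1 + v ≠ 0 := by linarith
    have hlin := (hasDerivAt_id v).const_add 1
    refine (((hlin.mul (hlin.log h1v)).sub (hasDerivAt_id v)).sub
      ((hasDerivAt_pow 2 v).div_const 4)).congr_deriv ?_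
    simp only [id]
    field_simp
    ring
  have hg0 : g 0 = 0 := by simp [g]
  suffices 0 ≤ g u by simp only [g] at this; linarith
  -- `g' v = log (1 + v) - v / 2` is `≥ 0` on `[0, 1]` and `≤ 0` on `[-1, 0]`.
  rcases le_total 0 u with hu | hu
  · have hmono : MonotoneOn g (Set.Icc 0 1) := by
      refine monotoneOn_of_hasDerivWithinAt_nonneg (f' := fun v => log (1 + v) - v / 2)
        (convex_Icc 0 1) hcont.continuousOn (fun v hv => ?_) (fun v hv => ?_) <;>
        obtain ⟨hv₀, hv₁⟩ := interior_Icc (a := (0 : ℝ)) ▸ hv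
      · exact (hderiv v (by linarith)).hasDerivWithinAt
      · have hpos : 0 < 1 + v := by linarith
        have hlog := one_sub_inv_le_log_of_pos hpos
        have hdiv : v / 2 ≤ v / (1 + v) := div_le_div_of_nonneg_left hv₀.le hpos (by linarith)
        have : 1 - (1 + v)⁻¹ = v / (1 + v) := by field_simp; ring
        linarith
    simpa [hg0] using hmono ⟨le_rfl, zero_le_one⟩ ⟨hu, hu₁⟩ hu
  · have hanti : AntitoneOn g (Set.Icc (-1) 0) := by
      refine antitoneOn_of_hasDerivWithinAt_nonpos (f' := fun v => log (1 + v) - v / 2)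
        (convex_Icc (-1) 0) hcont.continuousOn (fun v hv => ?_) (fun v hv => ?_) <;>
        obtain ⟨hv₀, hv₁⟩ := interior_Icc (a := (-1 : ℝ)) ▸ hv
      · exact (hderiv v hv₀).hasDerivWithinAt
      · linarith [log_le_sub_one_of_pos (show 0 < 1 + v by linarith)]
    simpa [hg0] using hanti ⟨hu₀, hu⟩ ⟨by norm_num, le_rfl⟩ hu

lemma poissonPMF_nonneg {l : ℝ} (hl : 0 ≤ l) (y : ℕ) : 0 ≤ poissonPMF l y := by
  unfold poissonPMF; positivity

lemma hasSum_poissonPMF_mul_exp (l t : ℝ) :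
    HasSum (fun y : ℕ => poissonPMF l y * exp (t * y)) (exp (l * (exp t - 1))) := by
  have hterm (y : ℕ) :
      poissonPMF l y * exp (t * y) = exp (-l) * ((l * exp t) ^ y / y.factorial) := by
    rw [poissonPMF, mul_pow, ← exp_nat_mul, mul_comm (y : ℝ) t]
    ring
  have hsum : exp (l * (exp t - 1)) = exp (-l) * NormedSpace.exp (l * exp t) := by
    rw [← exp_eq_exp_ℝ, ← exp_add]
    ring_nf
  simp_rw [hterm, hsum]
  exact (NormedSpace.expSeries_div_hasSum_exp (l * exp t)).mul_left (exp (-l))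

lemma hasSum_poissonPMF (l : ℝ) : HasSum (poissonPMF l) 1 := by
  simpa using hasSum_poissonPMF_mul_exp l 0

lemma tsum_subtype_poissonPMF_le_exp {l : ℝ} (hl : 0 ≤ l) (s : Set ℕ) (t a : ℝ)
    (hs : ∀ y ∈ s, t * a ≤ t * y) :
    ∑' y : s, poissonPMF l y ≤ exp (l * (exp t - 1) - t * a) := by
  set tilt : ℕ → ℝ := fun y => poissonPMF l y * exp (t * y) * exp (-(t * a))
  have htilt : HasSum tilt (exp (l * (exp t - 1) - t * a)) := by
    rw [sub_eq_add_neg, exp_add]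
    exact (hasSum_poissonPMF_mul_exp l t).mul_right _
  have hle : ∀ y ∈ s, poissonPMF l y ≤ tilt y := fun y hy => by
    simp only [tilt, mul_assoc, ← exp_add]
    exact le_mul_of_one_le_right (poissonPMF_nonneg hl y) (one_le_exp (by linarith [hs y hy]))
  calc ∑' y : s, poissonPMF l y ≤ ∑' y : s, tilt y :=
        Summable.tsum_le_tsum (fun y => hle y y.2) ((hasSum_poissonPMF l).summable.subtype s)
          (htilt.summable.subtype s)
    _ ≤ ∑' y, tilt y :=
        htilt.summable.tsum_subtype_le tilt s fun y => by
          have := poissonPMF_nonneg hl y; positivity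
    _ = _ := htilt.tsum_eq

lemma tsum_poissonPMF_upper_tail_le {l δ : ℝ} (hl : 0 ≤ l) (hδ : 0 ≤ δ) :
    ∑' y : {y : ℕ | (1 + δ) * l < y}, poissonPMF l y ≤
      exp (l * (δ - (1 + δ) * log (1 + δ))) := by
  refine (tsum_subtype_poissonPMF_le_exp hl _ (log (1 + δ)) ((1 + δ) * l)
    fun y hy => mul_le_mul_of_nonneg_left (le_of_lt hy) (log_nonneg (by linarith))).trans_eq ?_
  rw [exp_log (by linarith)]
  ring_nf

lemma tsum_poissonPMF_lower_tail_le {l δ : ℝ} (hl : 0 ≤ l) (hδ₀ : 0 ≤ δ)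
    (hδ₁ : δ ≤ 1) :
    ∑' y : {y : ℕ | y < (1 - δ) * l}, poissonPMF l y ≤
      exp (l * (-δ - (1 - δ) * log (1 - δ))) := by
  -- At `δ = 1` the tail is empty; the right-hand side is `exp (-l)` since `log 0 = 0`.
  rcases hδ₁.lt_or_eq with hδ₁ | rfl
  · refine (tsum_subtype_poissonPMF_le_exp hl _ (log (1 - δ)) ((1 - δ) * l)
      fun y hy => mul_le_mul_of_nonpos_left (le_of_lt hy)
        (log_nonpos (by linarith) (by linarith))).trans_eq ?_
    rw [exp_log (by linarith)]
    ring_nf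
  · have : IsEmpty {y : ℕ | (y : ℝ) < (1 - 1) * l} :=
      ⟨fun y => (Nat.cast_nonneg (y : ℕ)).not_gt (by simpa using y.2)⟩
    rw [tsum_empty]
    positivity

/-- For `λ ≥ 0` and `0 ≤ δ ≤ 1`, `Pr[|Poi(λ) − λ| ≤ δλ] ≥ 1 − 2·exp(−δ²·λ/4)`. -/
theorem stmt12 (l δ : ℝ) (hl : 0 ≤ l) (hδ : δ ∈ Set.Icc (0 : ℝ) 1) :
    1 - 2 * Real.exp (-(δ ^ 2 * l / 4)) ≤
      ∑' y : {y : ℕ // |(y : ℝ) - l| ≤ δ * l}, poissonPMF l y := by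
  obtain ⟨hδ₀, hδ₁⟩ := hδ
  have hupper : ∑' y : {y : ℕ | (1 + δ) * l < y}, poissonPMF l y ≤ exp (-(δ ^ 2 * l / 4)) :=
    (tsum_poissonPMF_upper_tail_le hl hδ₀).trans <| exp_le_exp.2 <| by
      linarith [mul_le_mul_of_nonneg_left
        (add_sq_div_four_le_one_add_mul_log (by linarith : -1 ≤ δ) hδ₁) hl]
  have hlower : ∑' y : {y : ℕ | y < (1 - δ) * l}, poissonPMF l y ≤ exp (-(δ ^ 2 * l / 4)) :=
    (tsum_poissonPMF_lower_tail_le hl hδ₀ hδ₁).trans <| exp_le_exp.2 <| by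
      have h := add_sq_div_four_le_one_add_mul_log (u := -δ) (by linarith) (by linarith)
      rw [← sub_eq_add_neg, neg_sq] at h
      linarith [mul_le_mul_of_nonneg_left h hl]
  have hcompl : {y : ℕ | |(y : ℝ) - l| ≤ δ * l}ᶜ ⊆
      {y : ℕ | (1 + δ) * l < y} ∪ {y : ℕ | y < (1 - δ) * l} := fun y hy => by
    simp only [Set.mem_compl_iff, Set.mem_ofPred_eq, not_le] at hy
    rcases lt_abs.1 hy with h | h
    exacts [Or.inl (show (1 + δ) * l < y by linarith), Or.inr (show y < (1 - δ) * l by linarith)]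
  have htail := tsum_subtype_le_add_of_subset_union (hasSum_poissonPMF l).summable
    (poissonPMF_nonneg hl) hcompl
  have hsplit := (hasSum_poissonPMF l).summable.tsum_subtype_add_tsum_subtype_compl
    {y : ℕ | |(y : ℝ) - l| ≤ δ * l}
  rw [(hasSum_poissonPMF l).tsum_eq] at hsplit
  change _ ≤ ∑' y : {y : ℕ | |(y : ℝ) - l| ≤ δ * l}, poissonPMF l y
  linarith
end
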